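/- arXiv:2106.12311 — 5 statements merged into one kernel-verified Lean document; each statement's English description precedes it below -/
import Mathlib

section
/- Let γ ∈ (0, 1/2) ∪ (1/2, 1) and θ > 0. Then as t → ∞, e^{-θt} ∫_0^t ∫_{-∞}^0 e^{θx} e^{θy} (y-x)^{2γ-2} dx dy is asymptotically equivalent to t^{2γ-2}/θ², i.e. the ratio of the two quantities tends to 1. -/
/-!
Write `α = 2γ - 2 ∈ (-2, 0)`. Reflecting `x ↦ -x`, the inner integral is `e^{θy} L(y)` with
`L(y) = ∫₀^∞ e^{-θu} (y + u)^α du`, and `L(y) ~ y^α / θ` by dominated convergence. The quantity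
is then the exponentially weighted average `e^{-θt} ∫₀^t e^{θy} L(y) dy`, which concentrates
near `y = t`: after substituting `y = t - u`, dominated convergence on `[1, t]` gives
`~ L(t) / θ ~ t^α / θ²`. On `(0, 1]`, AM-GM in the form `(y + u)^α ≤ (y u)^{α/2}` shows
`L(y) = O(y^{α/2})`, integrable because `α > -2`, and the factor `e^{-θt}` kills that piece.
-/

open MeasureTheory Real Set Filter Topology

lemma one_add_rpow_le {u β : ℝ} (hu : 0 ≤ u) (hβ : 0 ≤ β) :
    (1 + u) ^ β ≤ 2 ^ β * (1 + u ^ β) := by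
  have h2 : (0:ℝ) ≤ 2 ^ β := by positivity
  have huβ : 0 ≤ u ^ β := by positivity
  rcases le_total u 1 with hu1 | hu1
  · calc (1 + u) ^ β ≤ 2 ^ β := by gcongr; linarith
      _ ≤ 2 ^ β * (1 + u ^ β) := le_mul_of_one_le_right h2 (by linarith)
  · calc (1 + u) ^ β ≤ (2 * u) ^ β := by gcongr; linarith
      _ = 2 ^ β * u ^ β := mul_rpow zero_le_two hu
      _ ≤ 2 ^ β * (1 + u ^ β) := by gcongr; linarith

lemma rpow_sub_div_rpow_le {t u α : ℝ} (hα : α ≤ 0) (hu : 0 ≤ u) (htu : 1 ≤ t - u) :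
    (t - u) ^ α / t ^ α ≤ 2 ^ (-α) * (1 + u ^ (-α)) := by
  have ht : 0 < t := by linarith
  -- `t ≤ (t - u) * (1 + u)` because `t - u ≥ 1`
  have hle : (1 + u)⁻¹ ≤ (t - u) / t := by
    rw [inv_eq_one_div, div_le_div_iff₀ (by linarith) ht]
    nlinarith
  calc (t - u) ^ α / t ^ α = ((t - u) / t) ^ α := (div_rpow (by linarith) ht.le α).symm
    _ ≤ (1 + u)⁻¹ ^ α := rpow_le_rpow_of_nonpos (by positivity) hle hα
    _ = (1 + u) ^ (-α) := by rw [inv_rpow (by linarith), rpow_neg (by linarith)]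
    _ ≤ 2 ^ (-α) * (1 + u ^ (-α)) := one_add_rpow_le hu (by linarith)

lemma integrableOn_exp_neg_mul_Ioi_zero {θ : ℝ} (hθ : 0 < θ) :
    IntegrableOn (fun u => exp (-θ * u)) (Ioi 0) :=
  integrableOn_exp_mul_Ioi (by linarith) 0

lemma integral_exp_neg_mul_Ioi_zero {θ : ℝ} (hθ : 0 < θ) :
    ∫ u in Ioi 0, exp (-θ * u) = θ⁻¹ := by
  rw [integral_exp_mul_Ioi (by linarith), mul_zero, exp_zero, neg_div_neg_eq, one_div]

lemma integrableOn_rpow_mul_exp_neg_mul_Ioi_zero {θ β : ℝ} (hθ : 0 < θ) (hβ : -1 < β) :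
    IntegrableOn (fun u => u ^ β * exp (-θ * u)) (Ioi 0) := by
  simpa only [rpow_one] using integrableOn_rpow_mul_exp_neg_mul_rpow (p := 1) hβ one_pos hθ

lemma integrableOn_one_add_rpow_mul_exp_neg {θ β : ℝ} (hθ : 0 < θ) (hβ : -1 < β) :
    IntegrableOn (fun u => (1 + u ^ β) * exp (-θ * u)) (Ioi 0) := by
  refine IntegrableOn.congr_fun ((integrableOn_exp_neg_mul_Ioi_zero hθ).add
    (integrableOn_rpow_mul_exp_neg_mul_Ioi_zero hθ hβ)) (fun u _ => ?_) measurableSet_Ioi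
  simp only [Pi.add_apply]
  ring

section Abelian

variable {f : ℝ → ℝ} {θ α c M : ℝ}

lemma tendsto_comp_sub_div_rpow (hlim : Tendsto (fun y => f y / y ^ α) atTop (𝓝 c))
    (u : ℝ) :
    Tendsto (fun t => f (t - u) / t ^ α) atTop (𝓝 c) := by
  have hshift : Tendsto (fun t => f (t - u) / (t - u) ^ α) atTop (𝓝 c) :=
    hlim.comp (tendsto_atTop_add_const_right _ (-u) tendsto_id)
  have hratio : Tendsto (fun t => (1 - u * t⁻¹) ^ α) atTop (𝓝 1) := by
    have h := ((tendsto_inv_atTop_zero.const_mul u).const_sub 1).rpow_const (p := α)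
    simpa using h (by simp)
  simpa only [mul_one] using (hshift.mul hratio).congr' <| by
    filter_upwards [eventually_gt_atTop (max u 0)] with t ht
    have ht0 : 0 < t := (le_max_right _ _).trans_lt ht
    have htu : 0 < t - u := sub_pos.mpr ((le_max_left _ _).trans_lt ht)
    have : (0:ℝ) < (t - u) ^ α := rpow_pos_of_pos htu _
    rw [show 1 - u * t⁻¹ = (t - u) / t by field_simp, div_rpow htu.le ht0.le]
    field_simp

lemma tendsto_integral_indicator_exp_mul_div_rpow (hθ : 0 < θ) (hα : α ≤ 0)
    (hf : Measurable f) (hbound : ∀ y, 1 ≤ y → |f y| ≤ M * y ^ α)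
    (hlim : Tendsto (fun y => f y / y ^ α) atTop (𝓝 c)) :
    Tendsto (fun t => ∫ u in Ioi 0,
      (Ioc 0 (t - 1)).indicator (fun u => exp (-θ * u) * (f (t - u) / t ^ α)) u)
      atTop (𝓝 (c / θ)) := by
  have hexp_int : ∫ u in Ioi 0, exp (-θ * u) * c = c / θ := by
    rw [integral_mul_const, integral_exp_neg_mul_Ioi_zero hθ, inv_mul_eq_div]
  have hM : 0 ≤ M := (abs_nonneg _).trans (by simpa using hbound 1 le_rfl)
  rw [← hexp_int]
  refine tendsto_integral_filter_of_dominated_convergence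
    (fun u => M * 2 ^ (-α) * ((1 + u ^ (-α)) * exp (-θ * u))) ?_ ?_
    ((integrableOn_one_add_rpow_mul_exp_neg hθ (by linarith)).const_mul _) ?_
  · exact Eventually.of_forall fun t =>
      (Measurable.indicator (by fun_prop) measurableSet_Ioc).aestronglyMeasurable
  · filter_upwards with t
    filter_upwards [ae_restrict_mem measurableSet_Ioi] with u (hu : 0 < u)
    by_cases hmem : u ∈ Ioc 0 (t - 1)
    · have htu : 1 ≤ t - u := by linarith [hmem.2]
      rw [indicator_of_mem hmem, norm_mul, norm_div, norm_of_nonneg (exp_pos _).le,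
        norm_of_nonneg (rpow_nonneg (by linarith) _)]
      calc exp (-θ * u) * (‖f (t - u)‖ / t ^ α)
          ≤ exp (-θ * u) * (M * (t - u) ^ α / t ^ α) := by
            gcongr exp (-θ * u) * (?_ / _)
            · exact rpow_nonneg (by linarith) _
            · exact hbound _ htu
        _ = exp (-θ * u) * (M * ((t - u) ^ α / t ^ α)) := by rw [mul_div_assoc]
        _ ≤ exp (-θ * u) * (M * (2 ^ (-α) * (1 + u ^ (-α)))) := by
            gcongr
            exact rpow_sub_div_rpow_le hα hu.le htu
        _ = _ := by ring
    · rw [indicator_of_notMem hmem, norm_zero]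
      positivity
  · filter_upwards [ae_restrict_mem measurableSet_Ioi] with u (hu : 0 < u)
    refine ((tendsto_comp_sub_div_rpow hlim u).const_mul (exp (-θ * u))).congr' ?_
    filter_upwards [eventually_ge_atTop (u + 1)] with t ht
    rw [indicator_of_mem (show u ∈ Ioc 0 (t - 1) from ⟨hu, by linarith⟩)]

lemma exp_mul_integral_Icc_div_rpow_eq (hf : ∀ t, IntegrableOn f (Ioc 0 t)) {t : ℝ}
    (ht : 1 ≤ t) :
    exp (-θ * t) * (∫ y in Icc 0 t, exp (θ * y) * f y) / t ^ α =
      (∫ y in Ioc 0 1, exp (θ * y) * f y) * (t ^ (-α) * exp (-θ * t)) +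
      ∫ u in Ioi 0,
        (Ioc 0 (t - 1)).indicator (fun u => exp (-θ * u) * (f (t - u) / t ^ α)) u := by
  have hint : ∀ a b, 0 ≤ a → a ≤ b →
      IntervalIntegrable (fun y => exp (θ * y) * f y) volume a b := fun a b ha hab =>
    (intervalIntegrable_iff_integrableOn_Ioc_of_le hab).mpr <|
      ((hf b).mono_set (Ioc_subset_Ioc_left ha)).continuousOn_mul_of_subset
        (by fun_prop) isCompact_Icc measurableSet_Ioc Ioc_subset_Icc_self
  have hsplit : ∫ y in Icc 0 t, exp (θ * y) * f y =
      (∫ y in Ioc 0 1, exp (θ * y) * f y) +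
        ∫ u in (0)..(t - 1), exp (θ * (t - u)) * f (t - u) := by
    rw [intervalIntegral.integral_comp_sub_left (fun y => exp (θ * y) * f y), sub_sub_cancel,
      sub_zero, integral_Icc_eq_integral_Ioc, ← intervalIntegral.integral_of_le (by linarith),
      ← intervalIntegral.integral_add_adjacent_intervals (hint 0 1 le_rfl zero_le_one)
        (hint 1 t zero_le_one ht), intervalIntegral.integral_of_le zero_le_one]
  have htail : exp (-θ * t) * (∫ u in (0)..(t - 1), exp (θ * (t - u)) * f (t - u)) / t ^ α =
      ∫ u in Ioi 0,
        (Ioc 0 (t - 1)).indicator (fun u => exp (-θ * u) * (f (t - u) / t ^ α)) u := by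
    rw [integral_indicator measurableSet_Ioc, Measure.restrict_restrict measurableSet_Ioc,
      inter_eq_left.mpr Ioc_subset_Ioi_self, ← intervalIntegral.integral_of_le (by linarith),
      mul_div_assoc, ← intervalIntegral.integral_div, ← intervalIntegral.integral_const_mul]
    refine intervalIntegral.integral_congr fun u _ => ?_
    rw [← mul_div_assoc, ← mul_assoc, ← exp_add]
    ring_nf
  rw [hsplit, mul_add, add_div, htail, rpow_neg (by linarith)]
  ring

theorem tendsto_exp_mul_integral_exp_mul_div_rpow (hθ : 0 < θ) (hα : α ≤ 0)
    (hf : Measurable f) (hf_int : ∀ t, IntegrableOn f (Ioc 0 t))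
    (hbound : ∀ y, 1 ≤ y → |f y| ≤ M * y ^ α)
    (hlim : Tendsto (fun y => f y / y ^ α) atTop (𝓝 c)) :
    Tendsto (fun t => exp (-θ * t) * (∫ y in Icc 0 t, exp (θ * y) * f y) / t ^ α)
      atTop (𝓝 (c / θ)) := by
  have hhead := (tendsto_rpow_mul_exp_neg_mul_atTop_nhds_zero (-α) θ hθ).const_mul
    (∫ y in Ioc 0 1, exp (θ * y) * f y)
  rw [mul_zero] at hhead
  have hsum := hhead.add (tendsto_integral_indicator_exp_mul_div_rpow hθ hα hf hbound hlim)
  rw [zero_add] at hsum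
  refine hsum.congr' ?_
  filter_upwards [eventually_ge_atTop 1] with t ht
  exact (exp_mul_integral_Icc_div_rpow_eq hf_int ht).symm

end Abelian

lemma add_rpow_le_rpow_half_mul_rpow_half {y u α : ℝ} (hy : 0 < y) (hu : 0 < u)
    (hα : α ≤ 0) :
    (y + u) ^ α ≤ y ^ (α / 2) * u ^ (α / 2) := by
  have hyu : y * u ≤ (y + u) ^ 2 := by nlinarith [sq_nonneg (y - u)]
  calc (y + u) ^ α = ((y + u) ^ 2) ^ (α / 2) := by
        rw [← rpow_natCast, ← rpow_mul (by positivity)]; ring_nf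
    _ ≤ (y * u) ^ (α / 2) := rpow_le_rpow_of_nonpos (by positivity) hyu (by linarith)
    _ = y ^ (α / 2) * u ^ (α / 2) := mul_rpow hy.le hu.le

noncomputable def shiftedRpowLaplace (θ α y : ℝ) : ℝ :=
  ∫ u in Ioi 0, exp (-θ * u) * (y + u) ^ α

section ShiftedRpowLaplace

variable {θ α y : ℝ}

lemma integral_Iic_exp_mul_exp_mul_rpow_sub (θ α y : ℝ) :
    ∫ x in Iic 0, exp (θ * x) * exp (θ * y) * (y - x) ^ α =
      exp (θ * y) * shiftedRpowLaplace θ α y := by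
  have h := integral_comp_neg_Ioi 0 fun x => exp (θ * x) * exp (θ * y) * (y - x) ^ α
  rw [neg_zero] at h
  rw [← h, shiftedRpowLaplace, ← integral_const_mul]
  refine setIntegral_congr_fun measurableSet_Ioi fun u _ => ?_
  simp only [sub_neg_eq_add, mul_neg, neg_mul]
  ring

lemma measurable_shiftedRpowLaplace (θ α : ℝ) : Measurable (shiftedRpowLaplace θ α) :=
  (StronglyMeasurable.integral_prod_right'
    (f := fun p : ℝ × ℝ => exp (-θ * p.2) * (p.1 + p.2) ^ α) (by fun_prop)).measurable

lemma shiftedRpowLaplace_nonneg (hy : 0 ≤ y) : 0 ≤ shiftedRpowLaplace θ α y :=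
  setIntegral_nonneg measurableSet_Ioi fun u (hu : 0 < u) => by positivity

lemma abs_shiftedRpowLaplace_le (hθ : 0 < θ) (hα : α ≤ 0) (hy : 0 < y) :
    |shiftedRpowLaplace θ α y| ≤ θ⁻¹ * y ^ α := by
  rw [abs_of_nonneg (shiftedRpowLaplace_nonneg hy.le), ← integral_exp_neg_mul_Ioi_zero hθ,
    ← integral_mul_const, shiftedRpowLaplace]
  refine integral_mono_of_nonneg ?_ ((integrableOn_exp_neg_mul_Ioi_zero hθ).mul_const _) ?_
  all_goals filter_upwards [ae_restrict_mem measurableSet_Ioi] with u (hu : 0 < u)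
  · positivity
  · exact mul_le_mul_of_nonneg_left
      (rpow_le_rpow_of_nonpos hy (by linarith) hα) (exp_pos _).le

lemma shiftedRpowLaplace_le_rpow_half_mul (hθ : 0 < θ) (hα2 : -2 < α) (hα0 : α ≤ 0)
    (hy : 0 < y) :
    shiftedRpowLaplace θ α y ≤ (∫ u in Ioi 0, u ^ (α / 2) * exp (-θ * u)) * y ^ (α / 2) := by
  rw [← integral_mul_const, shiftedRpowLaplace]
  refine integral_mono_of_nonneg ?_
    ((integrableOn_rpow_mul_exp_neg_mul_Ioi_zero hθ (by linarith)).mul_const _) ?_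
  all_goals filter_upwards [ae_restrict_mem measurableSet_Ioi] with u (hu : 0 < u)
  · positivity
  · calc exp (-θ * u) * (y + u) ^ α ≤ exp (-θ * u) * (y ^ (α / 2) * u ^ (α / 2)) :=
          mul_le_mul_of_nonneg_left (add_rpow_le_rpow_half_mul_rpow_half hy hu hα0)
            (exp_pos _).le
      _ = u ^ (α / 2) * exp (-θ * u) * y ^ (α / 2) := by ring

lemma integrableOn_shiftedRpowLaplace_Ioc (hθ : 0 < θ) (hα2 : -2 < α) (hα0 : α ≤ 0) (t : ℝ) :
    IntegrableOn (shiftedRpowLaplace θ α) (Ioc 0 t) := by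
  have hpow : IntegrableOn (fun y : ℝ => y ^ (α / 2)) (Ioc 0 t) :=
    (intervalIntegral.intervalIntegrable_rpow' (by linarith)).def'.mono_set Ioc_subset_uIoc
  refine (hpow.const_mul (∫ u in Ioi 0, u ^ (α / 2) * exp (-θ * u))).mono'
    (measurable_shiftedRpowLaplace θ α).aestronglyMeasurable ?_
  filter_upwards [ae_restrict_mem measurableSet_Ioc] with y hy
  rw [norm_of_nonneg (shiftedRpowLaplace_nonneg hy.1.le)]
  exact shiftedRpowLaplace_le_rpow_half_mul hθ hα2 hα0 hy.1

lemma tendsto_shiftedRpowLaplace_div_rpow (hθ : 0 < θ) (hα : α ≤ 0) :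
    Tendsto (fun y => shiftedRpowLaplace θ α y / y ^ α) atTop (𝓝 θ⁻¹) := by
  have hlim : Tendsto (fun y => ∫ u in Ioi 0, exp (-θ * u) * (1 + u * y⁻¹) ^ α) atTop
      (𝓝 θ⁻¹) := by
    rw [← integral_exp_neg_mul_Ioi_zero hθ]
    refine tendsto_integral_filter_of_dominated_convergence _
      (Eventually.of_forall fun y => by fun_prop) ?_ (integrableOn_exp_neg_mul_Ioi_zero hθ) ?_
    · filter_upwards [eventually_gt_atTop 0] with y hy
      filter_upwards [ae_restrict_mem measurableSet_Ioi] with u (hu : 0 < u)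
      rw [norm_of_nonneg (by positivity)]
      refine mul_le_of_le_one_right (exp_pos _).le (rpow_le_one_of_one_le_of_nonpos ?_ hα)
      have : 0 ≤ u * y⁻¹ := by positivity
      linarith
    · filter_upwards with u
      have h := ((tendsto_inv_atTop_zero.const_mul u).const_add 1).rpow_const (p := α)
      simpa using (h (by simp)).const_mul (exp (-θ * u))
  refine hlim.congr' ?_
  filter_upwards [eventually_gt_atTop 0] with y hy
  rw [shiftedRpowLaplace, ← integral_div]
  refine setIntegral_congr_fun measurableSet_Ioi fun u (hu : 0 < u) => ?_
  rw [mul_div_assoc, ← div_rpow (by linarith) hy.le, add_div, div_self hy.ne', div_eq_mul_inv]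

end ShiftedRpowLaplace

theorem stmt_1_general (γ θ : ℝ) (hγ0 : 0 < γ) (hγ1 : γ < 1) (hθ : 0 < θ) :
    Tendsto (fun t : ℝ =>
      (Real.exp (-θ * t) *
        ∫ y in Icc (0:ℝ) t, ∫ x in Iic (0:ℝ),
          Real.exp (θ * x) * Real.exp (θ * y) * (y - x) ^ (2 * γ - 2))
      / (t ^ (2 * γ - 2) / θ ^ 2)) atTop (nhds 1) := by
  have hα0 : 2 * γ - 2 ≤ 0 := by linarith
  have hα2 : -2 < 2 * γ - 2 := by linarith
  have h := (tendsto_exp_mul_integral_exp_mul_div_rpow hθ hα0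
    (measurable_shiftedRpowLaplace θ _) (integrableOn_shiftedRpowLaplace_Ioc hθ hα2 hα0)
    (fun y hy => abs_shiftedRpowLaplace_le hθ hα0 (by linarith))
    (tendsto_shiftedRpowLaplace_div_rpow hθ hα0)).const_mul (θ ^ 2)
  rw [show θ ^ 2 * (θ⁻¹ / θ) = 1 by field_simp] at h
  refine h.congr fun t => ?_
  simp only [integral_Iic_exp_mul_exp_mul_rpow_sub]
  rw [div_div_eq_mul_div]
  ring

theorem stmt_1 (γ θ : ℝ) (hγ0 : 0 < γ) (hγ1 : γ < 1) (hγhalf : γ ≠ 1/2) (hθ : 0 < θ) :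
    Tendsto (fun t : ℝ =>
      (Real.exp (-θ * t) *
        ∫ y in Icc (0:ℝ) t, ∫ x in Iic (0:ℝ),
          Real.exp (θ * x) * Real.exp (θ * y) * (y - x) ^ (2 * γ - 2))
      / (t ^ (2 * γ - 2) / θ ^ 2)) atTop (nhds 1) :=
  stmt_1_general γ θ hγ0 hγ1 hθ
end

section
/- Let γ ∈ (0, 1/2) ∪ (1/2, 1) and θ > 0. There exists a constant C > 0 depending only on θ and γ such that for all 0 < s < t with t - s > 2, e^{-θt} e^{-θs} ∫_s^t ∫_0^s e^{θx} e^{θy} (y-x)^{2γ-2} dx dy ≤ C (t-s)^{2γ-2}. -/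
open MeasureTheory Real Set

/-! With `u = s - x` and `v = y - s` the quantity becomes
`∫₀^{t-s} ∫₀^s e^{-θu} e^{-θ(t-s-v)} (u + v)^{2γ-2} du dv`. Where `v ≥ (t-s)/2` the power is at
most `((t-s)/2)^{2γ-2}` and the two exponentials integrate to at most `θ⁻²`. Where `v ≤ (t-s)/2`
the factor `e^{-θ(t-s)/2}` absorbs any polynomial growth in `t - s`, and
`(u + v)^{2γ-2} ≤ u^{γ-1} v^{γ-1}` separates the variables into a Gamma integral in `u` and
`∫ v^{γ-1} dv = (t-s)^γ/γ`, both finite because `γ - 1 > -1`. -/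

lemma rpow_add_two_mul_le_rpow_mul_rpow {u v q : ℝ} (hu : 0 < u) (hv : 0 < v) (hq : q ≤ 0) :
    (u + v) ^ (2 * q) ≤ u ^ q * v ^ q := by
  rw [two_mul, rpow_add (by linarith)]
  exact mul_le_mul (rpow_le_rpow_of_nonpos hu (by linarith) hq)
    (rpow_le_rpow_of_nonpos hv (by linarith) hq) (by positivity) (by positivity)

lemma half_rpow_le {T p : ℝ} (hT : 0 ≤ T) (hp : -2 ≤ p) : (T / 2) ^ p ≤ 4 * T ^ p := by
  have h : (2 : ℝ) ^ (-2 : ℝ) ≤ 2 ^ p := rpow_le_rpow_of_exponent_le (by norm_num) hp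
  rw [rpow_neg (by norm_num), rpow_two] at h
  rw [div_rpow hT zero_le_two, div_le_iff₀ (by positivity)]
  nlinarith [rpow_nonneg hT p]

lemma exp_neg_half_mul_mul_sq_le {θ T : ℝ} (hθ : 0 < θ) (hT : 0 ≤ T) :
    exp (-(θ * T / 2)) * T ^ 2 ≤ 8 / θ ^ 2 := by
  have hquad := quadratic_le_exp_of_nonneg (x := θ * T / 2) (by positivity)
  have hinv : exp (-(θ * T / 2)) * exp (θ * T / 2) = 1 := by rw [← exp_add]; simp
  rw [le_div_iff₀ (by positivity)]
  nlinarith [exp_pos (-(θ * T / 2)), exp_pos (θ * T / 2)]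

lemma setIntegral_exp_mul_Icc_le {θ a b : ℝ} (hθ : 0 < θ) (hab : a ≤ b) :
    ∫ x in Icc a b, exp (θ * x) ≤ exp (θ * b) / θ := by
  rw [integral_Icc_eq_integral_Ioc, ← intervalIntegral.integral_of_le hab,
    intervalIntegral.integral_comp_mul_left (fun x => exp x) hθ.ne', integral_exp,
    smul_eq_mul, div_eq_inv_mul]
  gcongr
  linarith [exp_pos (θ * a)]

lemma integrableOn_rpow_sub_Icc {r a b : ℝ} (hr : -1 < r) (c : ℝ) (hab : a ≤ b) :
    IntegrableOn (fun x => (x - c) ^ r) (Icc a b) := by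
  rw [← intervalIntegrable_iff_integrableOn_Icc_of_le hab]
  simpa using
    (intervalIntegral.intervalIntegrable_rpow' hr (a := a - c) (b := b - c)).comp_sub_right c

lemma integrableOn_sub_rpow_Icc {r a b : ℝ} (hr : -1 < r) (c : ℝ) (hab : a ≤ b) :
    IntegrableOn (fun x => (c - x) ^ r) (Icc a b) := by
  rw [← intervalIntegrable_iff_integrableOn_Icc_of_le hab]
  simpa using
    (intervalIntegral.intervalIntegrable_rpow' hr (a := c - a) (b := c - b)).comp_sub_left c

lemma setIntegral_rpow_sub_Icc {γ s t : ℝ} (hγ : 0 < γ) (hst : s ≤ t) :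
    ∫ y in Icc s t, (y - s) ^ (γ - 1) = (t - s) ^ γ / γ := by
  rw [integral_Icc_eq_integral_Ioc, ← intervalIntegral.integral_of_le hst,
    intervalIntegral.integral_comp_sub_right (fun u => u ^ (γ - 1)) s,
    integral_rpow (Or.inl (by linarith)), sub_self, sub_add_cancel, zero_rpow hγ.ne', sub_zero]

lemma setIntegral_exp_mul_mul_sub_rpow_le {θ γ a s : ℝ} (hθ : 0 < θ) (hγ : 0 < γ) (has : a ≤ s) :
    ∫ x in Icc a s, exp (θ * x) * (s - x) ^ (γ - 1) ≤ exp (θ * s) * ((1 / θ) ^ γ * Gamma γ) := by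
  have hshift (x : ℝ) : exp (θ * x) * (s - x) ^ (γ - 1)
      = exp (θ * s) * ((s - x) ^ (γ - 1) * exp (-(θ * (s - x)))) := by
    rw [show θ * x = θ * s + -(θ * (s - x)) by ring, exp_add]; ring
  have hint : IntegrableOn (fun u : ℝ => u ^ (γ - 1) * exp (-(θ * u))) (Ioi 0) := by
    simpa [neg_mul] using integrableOn_rpow_mul_exp_neg_mul_rpow (p := 1) (by linarith) one_pos hθ
  simp_rw [hshift]
  rw [integral_const_mul, integral_Icc_eq_integral_Ioc, ← intervalIntegral.integral_of_le has,
    intervalIntegral.integral_comp_sub_left (fun u => u ^ (γ - 1) * exp (-(θ * u))), sub_self,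
    intervalIntegral.integral_of_le (by linarith), ← integral_rpow_mul_exp_neg_mul_Ioi hγ hθ]
  gcongr
  · filter_upwards [ae_restrict_mem measurableSet_Ioi] with u (hu : 0 < u)
    positivity
  · exact Ioc_subset_Ioi_self

lemma exp_neg_half_mul_mul_rpow_le {θ γ T : ℝ} (hθ : 0 < θ) (hγ : 0 ≤ γ) (hT : 1 ≤ T) :
    exp (-(θ * T / 2)) * T ^ γ ≤ 8 / θ ^ 2 * T ^ (2 * γ - 2) := by
  have hsplit : T ^ γ = T ^ (2 * γ - 2) * T ^ (2 - γ) := by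
    rw [← rpow_add (by linarith)]; ring_nf
  have hsq : T ^ (2 - γ) ≤ T ^ 2 := by
    rw [← rpow_two]; exact rpow_le_rpow_of_exponent_le hT (by linarith)
  calc exp (-(θ * T / 2)) * T ^ γ
      ≤ exp (-(θ * T / 2)) * T ^ 2 * T ^ (2 * γ - 2) := by
        rw [hsplit, mul_comm (T ^ (2 * γ - 2)), ← mul_assoc]; gcongr
    _ ≤ 8 / θ ^ 2 * T ^ (2 * γ - 2) := by
        gcongr; exact exp_neg_half_mul_mul_sq_le hθ (by linarith)

section Kernel

variable {θ γ s t y : ℝ}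

lemma integrableOn_kernel (p : ℝ) (hy : s < y) :
    IntegrableOn (fun x => exp (θ * x) * exp (θ * y) * (y - x) ^ p) (Icc 0 s) := by
  refine ContinuousOn.integrableOn_Icc (ContinuousOn.mul (by fun_prop) ?_)
  exact ContinuousOn.rpow_const (by fun_prop) fun x hx => Or.inl (by linarith [hx.2])

lemma setIntegral_kernel_le_of_le_sub (hθ : 0 < θ) (hγ : γ ≤ 1) (hs : 0 ≤ s) {c : ℝ}
    (hc : 0 < c) (hcy : c ≤ y - s) :
    ∫ x in Icc 0 s, exp (θ * x) * exp (θ * y) * (y - x) ^ (2 * γ - 2)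
      ≤ exp (θ * y) * (exp (θ * s) / θ * c ^ (2 * γ - 2)) := by
  calc ∫ x in Icc 0 s, exp (θ * x) * exp (θ * y) * (y - x) ^ (2 * γ - 2)
      ≤ ∫ x in Icc 0 s, exp (θ * x) * (exp (θ * y) * c ^ (2 * γ - 2)) := by
        refine setIntegral_mono_on (integrableOn_kernel _ (by linarith))
          (Continuous.integrableOn_Icc (by fun_prop)) measurableSet_Icc fun x hx => ?_
        rw [← mul_assoc]
        exact mul_le_mul_of_nonneg_left
          (rpow_le_rpow_of_nonpos hc (by linarith [hx.2]) (by linarith)) (by positivity)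
    _ ≤ exp (θ * y) * (exp (θ * s) / θ * c ^ (2 * γ - 2)) := by
        rw [integral_mul_const, mul_left_comm]
        gcongr
        exact setIntegral_exp_mul_Icc_le hθ hs

lemma setIntegral_kernel_le_of_lt (hθ : 0 < θ) (hγ0 : 0 < γ) (hγ1 : γ ≤ 1) (hs : 0 ≤ s)
    (hy : s < y) :
    ∫ x in Icc 0 s, exp (θ * x) * exp (θ * y) * (y - x) ^ (2 * γ - 2)
      ≤ exp (θ * y) * (y - s) ^ (γ - 1) * (exp (θ * s) * ((1 / θ) ^ γ * Gamma γ)) := by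
  have hint : IntegrableOn (fun x => exp (θ * x) * (s - x) ^ (γ - 1)) (Icc 0 s) :=
    (integrableOn_sub_rpow_Icc (by linarith) s hs).continuousOn_mul (by fun_prop) isCompact_Icc
  calc ∫ x in Icc 0 s, exp (θ * x) * exp (θ * y) * (y - x) ^ (2 * γ - 2)
      = ∫ x in Ico 0 s, exp (θ * x) * exp (θ * y) * (y - x) ^ (2 * γ - 2) :=
        integral_Icc_eq_integral_Ico
    _ ≤ ∫ x in Ico 0 s, exp (θ * y) * (y - s) ^ (γ - 1) * (exp (θ * x) * (s - x) ^ (γ - 1)) := by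
        refine setIntegral_mono_on ((integrableOn_kernel _ hy).mono_set Ico_subset_Icc_self)
          ((hint.mono_set Ico_subset_Icc_self).const_mul _) measurableSet_Ico fun x hx => ?_
        have hsplit : y - x = (s - x) + (y - s) := by ring
        rw [show 2 * γ - 2 = 2 * (γ - 1) by ring, hsplit]
        have := rpow_add_two_mul_le_rpow_mul_rpow (sub_pos.2 hx.2) (sub_pos.2 hy)
          (by linarith : γ - 1 ≤ 0)
        calc exp (θ * x) * exp (θ * y) * ((s - x) + (y - s)) ^ (2 * (γ - 1))
            ≤ exp (θ * x) * exp (θ * y) * ((s - x) ^ (γ - 1) * (y - s) ^ (γ - 1)) := by gcongr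
          _ = _ := by ring
    _ = exp (θ * y) * (y - s) ^ (γ - 1) * ∫ x in Icc 0 s, exp (θ * x) * (s - x) ^ (γ - 1) := by
        rw [integral_const_mul, integral_Icc_eq_integral_Ico]
    _ ≤ _ := by
        gcongr
        exact setIntegral_exp_mul_mul_sub_rpow_le hθ hγ0 hs

lemma setIntegral_setIntegral_kernel_le (hθ : 0 < θ) (hγ0 : 0 < γ) (hγ1 : γ ≤ 1) (hs : 0 ≤ s)
    (hst : s < t) :
    ∫ y in Icc s t, ∫ x in Icc 0 s, exp (θ * x) * exp (θ * y) * (y - x) ^ (2 * γ - 2)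
      ≤ exp (θ * t) / θ * (exp (θ * s) / θ * ((t - s) / 2) ^ (2 * γ - 2))
        + exp (θ * ((s + t) / 2)) * (exp (θ * s) * ((1 / θ) ^ γ * Gamma γ))
          * ((t - s) ^ γ / γ) := by
  set A := exp (θ * s) / θ * ((t - s) / 2) ^ (2 * γ - 2)
  set K := exp (θ * s) * ((1 / θ) ^ γ * Gamma γ)
  set B := exp (θ * ((s + t) / 2)) * K
  have hintA : IntegrableOn (fun y => exp (θ * y) * A) (Icc s t) :=
    Continuous.integrableOn_Icc (by fun_prop)
  have hintB : IntegrableOn (fun y => B * (y - s) ^ (γ - 1)) (Icc s t) :=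
    (integrableOn_rpow_sub_Icc (by linarith) s hst.le).const_mul B
  calc ∫ y in Icc s t, ∫ x in Icc 0 s, exp (θ * x) * exp (θ * y) * (y - x) ^ (2 * γ - 2)
      = ∫ y in Ioc s t, ∫ x in Icc 0 s, exp (θ * x) * exp (θ * y) * (y - x) ^ (2 * γ - 2) :=
        integral_Icc_eq_integral_Ioc
    _ ≤ ∫ y in Ioc s t, (exp (θ * y) * A + B * (y - s) ^ (γ - 1)) := by
        refine integral_mono_of_nonneg ?_ ((hintA.add hintB).mono_set Ioc_subset_Icc_self) ?_
        · filter_upwards [ae_restrict_mem measurableSet_Ioc] with y hy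
          refine setIntegral_nonneg measurableSet_Icc fun x hx => ?_
          have : 0 < y - x := by linarith [hx.2, hy.1]
          positivity
        · filter_upwards [ae_restrict_mem measurableSet_Ioc] with y hy
          have hys : 0 < y - s := by linarith [hy.1]
          rcases le_total ((s + t) / 2) y with hmid | hmid
          · have := setIntegral_kernel_le_of_le_sub hθ hγ1 hs (y := y) (c := (t - s) / 2)
              (by linarith) (by linarith)
            have : 0 ≤ B * (y - s) ^ (γ - 1) := by positivity
            linarith
          · have hexp : exp (θ * y) * (y - s) ^ (γ - 1) * K ≤ B * (y - s) ^ (γ - 1) := by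
              rw [mul_right_comm]
              gcongr
              exact mul_le_mul_of_nonneg_right (exp_le_exp.2 (by gcongr)) (by positivity)
            have : 0 ≤ exp (θ * y) * A := by positivity
            linarith [setIntegral_kernel_le_of_lt hθ hγ0 hγ1 hs hy.1]
    _ = (∫ y in Icc s t, exp (θ * y)) * A + B * ∫ y in Icc s t, (y - s) ^ (γ - 1) := by
        rw [← integral_Icc_eq_integral_Ioc, integral_add hintA hintB, integral_mul_const,
          integral_const_mul]
    _ ≤ _ := by
        rw [setIntegral_rpow_sub_Icc hγ0 hst.le]
        gcongr
        exact setIntegral_exp_mul_Icc_le hθ hst.le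

lemma exp_mul_setIntegral_setIntegral_kernel_le (hθ : 0 < θ) (hγ0 : 0 < γ) (hγ1 : γ ≤ 1)
    (hs : 0 ≤ s) (hst : s < t) :
    exp (-θ * t) * exp (-θ * s) *
        ∫ y in Icc s t, ∫ x in Icc 0 s, exp (θ * x) * exp (θ * y) * (y - x) ^ (2 * γ - 2)
      ≤ ((t - s) / 2) ^ (2 * γ - 2) / θ ^ 2
        + exp (-(θ * (t - s) / 2)) * ((1 / θ) ^ γ * Gamma γ * ((t - s) ^ γ / γ)) := by
  have hmid : exp (θ * ((s + t) / 2)) = exp (θ * t) * exp (-(θ * (t - s) / 2)) := by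
    rw [← exp_add]; ring_nf
  refine (mul_le_mul_of_nonneg_left
    (setIntegral_setIntegral_kernel_le hθ hγ0 hγ1 hs hst) (by positivity)).trans_eq ?_
  rw [hmid, neg_mul, exp_neg, neg_mul, exp_neg]
  field_simp

end Kernel

theorem stmt_2_general (γ θ : ℝ) (hγ0 : 0 < γ) (hγ1 : γ < 1) (hθ : 0 < θ) :
    ∃ C > 0, ∀ s t : ℝ, 0 < s → s < t → t - s > 2 →
      Real.exp (-θ * t) * Real.exp (-θ * s) *
        ∫ y in Icc s t, ∫ x in Icc (0:ℝ) s,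
          Real.exp (θ * x) * Real.exp (θ * y) * (y - x) ^ (2 * γ - 2)
      ≤ C * (t - s) ^ (2 * γ - 2) := by
  refine ⟨4 / θ ^ 2 + 8 / θ ^ 2 * ((1 / θ) ^ γ * Gamma γ / γ), by positivity,
    fun s t hs hst hT => ?_⟩
  calc _ ≤ ((t - s) / 2) ^ (2 * γ - 2) / θ ^ 2
        + exp (-(θ * (t - s) / 2)) * ((1 / θ) ^ γ * Gamma γ * ((t - s) ^ γ / γ)) :=
        exp_mul_setIntegral_setIntegral_kernel_le hθ hγ0 hγ1.le hs.le hst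
    _ = ((t - s) / 2) ^ (2 * γ - 2) / θ ^ 2
        + exp (-(θ * (t - s) / 2)) * (t - s) ^ γ * ((1 / θ) ^ γ * Gamma γ / γ) := by ring
    _ ≤ 4 * (t - s) ^ (2 * γ - 2) / θ ^ 2
        + 8 / θ ^ 2 * (t - s) ^ (2 * γ - 2) * ((1 / θ) ^ γ * Gamma γ / γ) := by
        gcongr ?_ / _ + ?_ * _
        · exact half_rpow_le (by linarith) (by linarith)
        · exact exp_neg_half_mul_mul_rpow_le hθ hγ0.le (by linarith)
    _ = _ := by ring

theorem stmt_2 (γ θ : ℝ) (hγ0 : 0 < γ) (hγ1 : γ < 1) (hγhalf : γ ≠ 1/2) (hθ : 0 < θ) :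
    ∃ C > 0, ∀ s t : ℝ, 0 < s → s < t → t - s > 2 →
      Real.exp (-θ * t) * Real.exp (-θ * s) *
        ∫ y in Icc s t, ∫ x in Icc (0:ℝ) s,
          Real.exp (θ * x) * Real.exp (θ * y) * (y - x) ^ (2 * γ - 2)
      ≤ C * (t - s) ^ (2 * γ - 2) :=
  stmt_2_general γ θ hγ0 hγ1 hθ
end

section
/- Let γ ∈ (0,1) and θ > 0 with θ = 1/γ - 1. Then as t → ∞, e^{-θt} ∫_0^t ∫_{-∞}^0 e^{θx} e^{θy} (e^{(y-x)/(2γ)} - e^{-(y-x)/(2γ)})^{2γ-2} dx dy is asymptotically equivalent to t e^{-θt}/(2θ). -/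
/-!
After factoring `e^{(y-x)/(2γ)}` out of the bracket, the relation `θ = 1/γ - 1` turns the integrand
into `e^{2θx} k(y - x)` with `k(u) = (1 - e^{-u/γ})^{2γ-2}`. Since `k ≥ 1` decreases to `1`, the
inner integral `F(y)` lies between `1/(2θ)` and `k(y)/(2θ)`, so `F(y) → 1/(2θ)`, and the outer
integral is `t/(2θ) + o(t)` by a Cesàro argument. Near `y = 0`, `F(y) = O(y^{γ-1})`, which is
integrable.
-/

open MeasureTheory Real Set Filter Topology

theorem isLittleO_intervalIntegral_of_tendsto_zero {E : Type*} [NormedAddCommGroup E]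
    [NormedSpace ℝ E] {g : ℝ → E} {a : ℝ} (hg : Tendsto g atTop (𝓝 0))
    (hint : ∀ t, IntegrableOn g (Ioc a t)) :
    (fun t => ∫ y in a..t, g y) =o[atTop] id := by
  have hint' {b c : ℝ} (hab : a ≤ b) (hbc : b ≤ c) : IntervalIntegrable g volume b c :=
    (intervalIntegrable_iff_integrableOn_Ioc_of_le hbc).2
      ((hint c).mono_set (Ioc_subset_Ioc_left hab))
  refine Asymptotics.IsLittleO.of_bound fun c hc => ?_
  obtain ⟨M, hM⟩ := eventually_atTop.1 <|
    hg.eventually (Metric.closedBall_mem_nhds 0 (half_pos hc))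
  set N := max M (max a 0)
  set C := ‖∫ y in a..N, g y‖
  have hMN : M ≤ N := le_max_left _ _
  have haN : a ≤ N := (le_max_left _ _).trans (le_max_right _ _)
  have h0N : 0 ≤ N := (le_max_right _ _).trans (le_max_right _ _)
  filter_upwards [eventually_ge_atTop N, eventually_ge_atTop (2 * C / c)] with t htN htC
  have htail : ‖∫ y in N..t, g y‖ ≤ c / 2 * |t - N| := by
    refine intervalIntegral.norm_integral_le_of_norm_le_const fun y hy => ?_
    simpa using hM y (hMN.trans (uIoc_of_le htN ▸ hy).1.le)
  have hC : C ≤ c / 2 * t := by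
    rw [div_le_iff₀ hc] at htC
    linarith
  calc ‖∫ y in a..t, g y‖
      = ‖(∫ y in a..N, g y) + ∫ y in N..t, g y‖ := by
        rw [intervalIntegral.integral_add_adjacent_intervals (hint' le_rfl haN) (hint' haN htN)]
    _ ≤ C + c / 2 * |t - N| := norm_add_le_of_le le_rfl htail
    _ ≤ c * ‖id t‖ := by
        rw [abs_of_nonneg (sub_nonneg.2 htN), id, norm_of_nonneg (h0N.trans htN)]
        nlinarith

theorem Filter.Tendsto.inv_smul_intervalIntegral {E : Type*} [NormedAddCommGroup E]
    [NormedSpace ℝ E] [CompleteSpace E] {f : ℝ → E} {a : ℝ} {L : E} (hf : Tendsto f atTop (𝓝 L))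
    (hint : ∀ t, IntegrableOn f (Ioc a t)) :
    Tendsto (fun t => t⁻¹ • ∫ y in a..t, f y) atTop (𝓝 L) := by
  have hsmall := isLittleO_intervalIntegral_of_tendsto_zero (tendsto_sub_nhds_zero_iff.2 hf)
    fun t => (hint t).sub (integrableOn_const measure_Ioc_lt_top.ne)
  have hconst : Tendsto (fun t : ℝ => t⁻¹ • ((t - a) • L)) atTop (𝓝 L) := by
    have : Tendsto (fun t : ℝ => 1 - a * t⁻¹) atTop (𝓝 1) := by
      simpa using (tendsto_inv_atTop_zero.const_mul a).const_sub 1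
    refine (this.smul_const L).congr' ?_ |>.trans (by simp)
    filter_upwards [eventually_ne_atTop 0] with t ht
    rw [smul_smul, mul_sub, inv_mul_cancel₀ ht, mul_comm]
  refine (hsmall.tendsto_inv_smul_nhds_zero.add hconst).congr' ?_ |>.trans (by simp)
  filter_upwards [eventually_ge_atTop a] with t hat
  have hfint : IntervalIntegrable f volume a t :=
    (intervalIntegrable_iff_integrableOn_Ioc_of_le hat).2 (hint t)
  rw [id, ← smul_add, intervalIntegral.integral_sub hfint intervalIntegrable_const,
    intervalIntegral.integral_const, sub_add_cancel]

theorem integrableOn_Iic_sub_rpow {p y : ℝ} (hp : p < -1) (hy : 0 < y) :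
    IntegrableOn (fun x => (y - x) ^ p) (Iic 0) := by
  have := (integrableOn_add_rpow_Ioi_of_lt hp (by simpa : -y < -0)).comp_neg_Iio
  rw [integrableOn_Iic_iff_integrableOn_Iio]
  simpa [neg_add_eq_sub] using this

theorem integral_Iic_sub_rpow {p y : ℝ} (hp : p < -1) (hy : 0 < y) :
    ∫ x in Iic 0, (y - x) ^ p = -y ^ (p + 1) / (p + 1) := by
  have hderiv : ∀ x ∈ Iic (0 : ℝ),
      HasDerivAt (fun x => -(y - x) ^ (p + 1) / (p + 1)) ((y - x) ^ p) x := by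
    intro x hx
    have hsub : HasDerivAt (fun x => y - x) (-1) x := by simpa using (hasDerivAt_id x).const_sub y
    refine ((hsub.rpow_const (p := p + 1) (Or.inl (by linarith [mem_Iic.1 hx]))).neg.div_const
      (p + 1)).congr_deriv ?_
    field_simp [show p + 1 ≠ 0 by linarith]
    simp
  have hlim : Tendsto (fun x => -(y - x) ^ (p + 1) / (p + 1)) atBot (𝓝 0) := by
    have h := (tendsto_rpow_neg_atTop (y := -(p + 1)) (by linarith)).comp
      (tendsto_atTop_add_const_left _ y tendsto_neg_atBot_atTop)
    simpa [Function.comp_def, ← sub_eq_add_neg] using h.neg.div_const (p + 1)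
  simpa using integral_Iic_of_hasDerivAt_of_tendsto' hderiv (integrableOn_Iic_sub_rpow hp hy) hlim

theorem half_le_one_sub_exp_neg {s : ℝ} (hs0 : 0 ≤ s) (hs1 : s ≤ 1) : s / 2 ≤ 1 - exp (-s) := by
  have h1 : s + 1 ≤ exp s := add_one_le_exp s
  have h2 : exp (-s) * exp s = 1 := by rw [← exp_add]; simp
  nlinarith [exp_pos (-s)]

noncomputable def kernel (γ u : ℝ) : ℝ := (1 - exp (-u / γ)) ^ (2 * γ - 2)

section Kernel

variable {γ u v : ℝ}

@[fun_prop]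
theorem measurable_kernel : Measurable (kernel γ) := by
  unfold kernel; fun_prop

theorem one_sub_exp_neg_div_pos (hγ : 0 < γ) (hu : 0 < u) : 0 < 1 - exp (-u / γ) :=
  sub_pos.2 (exp_lt_one_iff.2 (div_neg_of_neg_of_pos (neg_neg_of_pos hu) hγ))

theorem one_le_kernel (hγ0 : 0 < γ) (hγ1 : γ < 1) (hu : 0 < u) : 1 ≤ kernel γ u :=
  one_le_rpow_of_pos_of_le_one_of_nonpos (one_sub_exp_neg_div_pos hγ0 hu)
    (by linarith [exp_pos (-u / γ)]) (by linarith)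

theorem kernel_le_kernel (hγ0 : 0 < γ) (hγ1 : γ < 1) (hu : 0 < u) (huv : u ≤ v) :
    kernel γ v ≤ kernel γ u := by
  refine rpow_le_rpow_of_nonpos (one_sub_exp_neg_div_pos hγ0 hu) ?_ (by linarith)
  have : exp (-v / γ) ≤ exp (-u / γ) := exp_le_exp.2 (by gcongr)
  linarith

theorem tendsto_kernel_atTop (hγ : 0 < γ) : Tendsto (kernel γ) atTop (𝓝 1) := by
  have hexp : Tendsto (fun u => exp (-u / γ)) atTop (𝓝 0) :=
    tendsto_exp_atBot.comp (tendsto_neg_atTop_atBot.atBot_div_const hγ)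
  unfold kernel
  simpa using ((hexp.const_sub 1).rpow_const (p := 2 * γ - 2) (Or.inl (by simp)))

-- Lowering the exponent `2γ - 2` to `γ - 2 < -1` makes the singular part integrable in `x ≤ 0`
-- for every `γ`, including `γ ≤ 1/2`.
theorem kernel_le_add_rpow (hγ0 : 0 < γ) (hγ1 : γ < 1) (hu : 0 < u) :
    kernel γ u ≤ kernel γ γ + (2 * γ) ^ (2 - γ) * u ^ (γ - 2) := by
  have hsing : 0 ≤ (2 * γ) ^ (2 - γ) * u ^ (γ - 2) := by positivity
  rcases le_or_gt γ u with hγu | huγ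
  · linarith [kernel_le_kernel hγ0 hγ1 hγ0 hγu]
  have hB := one_sub_exp_neg_div_pos hγ0 hu
  have hhalf : u / (2 * γ) ≤ 1 - exp (-u / γ) := by
    have := half_le_one_sub_exp_neg (by positivity : 0 ≤ u / γ) ((div_le_one hγ0).2 huγ.le)
    rwa [neg_div, mul_comm, ← div_div]
  calc kernel γ u ≤ (1 - exp (-u / γ)) ^ (γ - 2) :=
        rpow_le_rpow_of_exponent_ge hB (by linarith [exp_pos (-u / γ)]) (by linarith)
    _ ≤ (u / (2 * γ)) ^ (γ - 2) := rpow_le_rpow_of_nonpos (by positivity) hhalf (by linarith)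
    _ = (2 * γ) ^ (2 - γ) * u ^ (γ - 2) := by
        rw [div_rpow hu.le (by positivity), div_eq_mul_inv, ← rpow_neg (by positivity), neg_sub,
          mul_comm]
    _ ≤ _ := by linarith [one_le_kernel hγ0 hγ1 hγ0]

end Kernel

theorem exp_mul_exp_mul_sinh_rpow_eq {γ θ x y : ℝ} (hγ : 0 < γ) (hθγ : θ = 1 / γ - 1)
    (hxy : x < y) :
    exp (θ * x) * exp (θ * y) *
        (exp ((y - x) / (2 * γ)) - exp (-(y - x) / (2 * γ))) ^ (2 * γ - 2) =
      exp (2 * θ * x) * kernel γ (y - x) := by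
  have hfactor : exp ((y - x) / (2 * γ)) - exp (-(y - x) / (2 * γ)) =
      exp ((y - x) / (2 * γ)) * (1 - exp (-(y - x) / γ)) := by
    rw [mul_sub, mul_one, ← exp_add]
    congr 2
    field_simp
    ring
  rw [hfactor, mul_rpow (exp_pos _).le (one_sub_exp_neg_div_pos hγ (sub_pos.2 hxy)).le,
    ← exp_mul, ← mul_assoc, ← exp_add, ← exp_add, kernel]
  congr 2
  subst hθγ
  field_simp
  ring

noncomputable def kernelIntegral (γ θ y : ℝ) : ℝ := ∫ x in Iic 0, exp (2 * θ * x) * kernel γ (y - x)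

section KernelIntegral

variable {γ θ y : ℝ}

theorem integrableOn_exp_mul_kernel (hγ0 : 0 < γ) (hγ1 : γ < 1) (hθ : 0 < θ) (hy : 0 < y) :
    IntegrableOn (fun x => exp (2 * θ * x) * kernel γ (y - x)) (Iic 0) := by
  refine ((integrableOn_exp_mul_Iic (a := 2 * θ) (by positivity) 0).const_mul (kernel γ y)).mono'
    (Measurable.aestronglyMeasurable (by fun_prop)) ?_
  filter_upwards [ae_restrict_mem measurableSet_Iic] with x hx
  have hyx : y ≤ y - x := by linarith [mem_Iic.1 hx]
  have hk := one_le_kernel hγ0 hγ1 (hy.trans_le hyx)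
  rw [norm_of_nonneg (by positivity), mul_comm]
  exact mul_le_mul_of_nonneg_right (kernel_le_kernel hγ0 hγ1 hy hyx) (exp_pos _).le

theorem inv_le_kernelIntegral (hγ0 : 0 < γ) (hγ1 : γ < 1) (hθ : 0 < θ) (hy : 0 < y) :
    (2 * θ)⁻¹ ≤ kernelIntegral γ θ y := by
  have h2θ : 0 < 2 * θ := by positivity
  calc (2 * θ)⁻¹ = ∫ x in Iic 0, exp (2 * θ * x) := by simp [integral_exp_mul_Iic h2θ]
    _ ≤ kernelIntegral γ θ y :=
      setIntegral_mono_on (integrableOn_exp_mul_Iic h2θ 0)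
        (integrableOn_exp_mul_kernel hγ0 hγ1 hθ hy) measurableSet_Iic fun x hx =>
          le_mul_of_one_le_right (exp_pos _).le
            (one_le_kernel hγ0 hγ1 (by linarith [mem_Iic.1 hx]))

theorem kernelIntegral_le (hγ0 : 0 < γ) (hγ1 : γ < 1) (hθ : 0 < θ) (hy : 0 < y) :
    kernelIntegral γ θ y ≤ kernel γ y * (2 * θ)⁻¹ := by
  have h2θ : 0 < 2 * θ := by positivity
  calc kernelIntegral γ θ y ≤ ∫ x in Iic 0, kernel γ y * exp (2 * θ * x) :=
      setIntegral_mono_on (integrableOn_exp_mul_kernel hγ0 hγ1 hθ hy)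
        ((integrableOn_exp_mul_Iic h2θ 0).const_mul _) measurableSet_Iic fun x hx => by
          rw [mul_comm]
          exact mul_le_mul_of_nonneg_right
            (kernel_le_kernel hγ0 hγ1 hy (by linarith [mem_Iic.1 hx])) (exp_pos _).le
    _ = kernel γ y * (2 * θ)⁻¹ := by simp [integral_const_mul, integral_exp_mul_Iic h2θ]

theorem tendsto_kernelIntegral_atTop (hγ0 : 0 < γ) (hγ1 : γ < 1) (hθ : 0 < θ) :
    Tendsto (kernelIntegral γ θ) atTop (𝓝 (2 * θ)⁻¹) :=
  tendsto_of_tendsto_of_tendsto_of_le_of_le' tendsto_const_nhds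
    (by simpa using (tendsto_kernel_atTop hγ0).mul_const (2 * θ)⁻¹)
    ((eventually_gt_atTop 0).mono fun _ hy => inv_le_kernelIntegral hγ0 hγ1 hθ hy)
    ((eventually_gt_atTop 0).mono fun _ hy => kernelIntegral_le hγ0 hγ1 hθ hy)

theorem kernelIntegral_le_add_rpow (hγ0 : 0 < γ) (hγ1 : γ < 1) (hθ : 0 < θ) (hy : 0 < y) :
    kernelIntegral γ θ y ≤
      kernel γ γ * (2 * θ)⁻¹ + (2 * γ) ^ (2 - γ) / (1 - γ) * y ^ (γ - 1) := by
  have h2θ : 0 < 2 * θ := by positivity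
  have hp : γ - 2 < -1 := by linarith
  have hexp := (integrableOn_exp_mul_Iic h2θ 0).const_mul (kernel γ γ)
  have hsing := (integrableOn_Iic_sub_rpow hp hy).const_mul ((2 * γ) ^ (2 - γ))
  calc kernelIntegral γ θ y
      ≤ ∫ x in Iic 0, (kernel γ γ * exp (2 * θ * x) + (2 * γ) ^ (2 - γ) * (y - x) ^ (γ - 2)) :=
      setIntegral_mono_on (integrableOn_exp_mul_kernel hγ0 hγ1 hθ hy) (hexp.add hsing)
        measurableSet_Iic fun x hx => by
          have hyx : 0 < y - x := by linarith [mem_Iic.1 hx]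
          have hle := kernel_le_add_rpow hγ0 hγ1 hyx
          have hexp1 : exp (2 * θ * x) ≤ 1 := exp_le_one_iff.2 (by nlinarith [mem_Iic.1 hx])
          have : 0 ≤ (2 * γ) ^ (2 - γ) * (y - x) ^ (γ - 2) := by positivity
          nlinarith [exp_pos (2 * θ * x)]
    _ = kernel γ γ * (2 * θ)⁻¹ + (2 * γ) ^ (2 - γ) / (1 - γ) * y ^ (γ - 1) := by
      rw [integral_add hexp hsing, integral_const_mul, integral_const_mul,
        integral_Iic_sub_rpow hp hy, integral_exp_mul_Iic h2θ]
      rw [show γ - 2 + 1 = γ - 1 by ring, mul_zero, exp_zero]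
      field_simp [show γ - 1 ≠ 0 by linarith, show 1 - γ ≠ 0 by linarith]
      ring

theorem integrableOn_kernelIntegral (hγ0 : 0 < γ) (hγ1 : γ < 1) (hθ : 0 < θ) (t : ℝ) :
    IntegrableOn (kernelIntegral γ θ) (Ioc 0 t) := by
  have hmeas : StronglyMeasurable (kernelIntegral γ θ) :=
    (Measurable.stronglyMeasurable (by fun_prop : Measurable fun p : ℝ × ℝ =>
      exp (2 * θ * p.2) * kernel γ (p.1 - p.2))).integral_prod_right'
  have hbound : IntegrableOn
      (fun y => kernel γ γ * (2 * θ)⁻¹ + (2 * γ) ^ (2 - γ) / (1 - γ) * y ^ (γ - 1)) (Ioc 0 t) :=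
    (integrableOn_const measure_Ioc_lt_top.ne).add
      ((intervalIntegral.intervalIntegrable_rpow' (by linarith : -1 < γ - 1)).1.const_mul _)
  refine hbound.mono' hmeas.aestronglyMeasurable ?_
  filter_upwards [ae_restrict_mem measurableSet_Ioc] with y hy
  rw [norm_of_nonneg ((inv_pos.2 (by positivity)).le.trans (inv_le_kernelIntegral hγ0 hγ1 hθ hy.1))]
  exact kernelIntegral_le_add_rpow hγ0 hγ1 hθ hy.1

end KernelIntegral

theorem setIntegral_Iic_eq_kernelIntegral {γ θ y : ℝ} (hγ : 0 < γ) (hθγ : θ = 1 / γ - 1)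
    (hy : 0 ≤ y) :
    ∫ x in Iic 0, exp (θ * x) * exp (θ * y) *
        (exp ((y - x) / (2 * γ)) - exp (-(y - x) / (2 * γ))) ^ (2 * γ - 2) =
      kernelIntegral γ θ y := by
  refine setIntegral_congr_ae measurableSet_Iic ?_
  filter_upwards [compl_mem_ae_iff.2 (measure_singleton y)] with x hxy hx
  exact exp_mul_exp_mul_sinh_rpow_eq hγ hθγ (lt_of_le_of_ne (le_trans hx hy) hxy)

theorem stmt_5 (γ θ : ℝ) (hγ0 : 0 < γ) (hγ1 : γ < 1) (hθ : 0 < θ) (hθγ : θ = 1/γ - 1) :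
    Tendsto (fun t : ℝ =>
      (Real.exp (-θ * t) *
        ∫ y in Icc (0:ℝ) t, ∫ x in Iic (0:ℝ),
          Real.exp (θ * x) * Real.exp (θ * y) *
            (Real.exp ((y - x) / (2 * γ)) - Real.exp (-(y - x) / (2 * γ))) ^ (2 * γ - 2))
      / (t * Real.exp (-θ * t) / (2 * θ)))
      atTop (nhds 1) := by
  have hmean := ((tendsto_kernelIntegral_atTop hγ0 hγ1 hθ).inv_smul_intervalIntegral
    (integrableOn_kernelIntegral hγ0 hγ1 hθ)).const_mul (2 * θ)
  rw [mul_inv_cancel₀ (by positivity)] at hmean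
  refine hmean.congr' ?_
  filter_upwards [eventually_gt_atTop 0] with t ht
  rw [setIntegral_congr_fun measurableSet_Icc fun y hy =>
      setIntegral_Iic_eq_kernelIntegral hγ0 hθγ hy.1,
    integral_Icc_eq_integral_Ioc, ← intervalIntegral.integral_of_le ht.le, smul_eq_mul]
  field_simp
end

section
/- Let θ > 0 and let ρ: ℝ → ℝ be a continuous function with ∫_0^∞ e^{-θt}|ρ(t)| dt < ∞ and ρ even. Suppose G is a centered process with G_0 = 0, stationary increments, and E(G_t²) = ρ(t). Then the stationary variance σ² := θ² ∫_{-∞}^0 ∫_{-∞}^0 e^{θu} e^{θv} R(u,v) du dv, where R(u,v) = (ρ(u) + ρ(v) - ρ(v-u))/2, satisfies σ² = (θ/2) ∫_0^∞ e^{-θt} ρ(t) dt. -/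
/-!
Write `A = ∫₀^∞ e^{-θt} ρ t dt`. By evenness `∫_{-∞}^0 e^{θu} ρ u du = A` as well, so after
splitting `R` the terms `ρ u` and `ρ v` contribute products of one-dimensional integrals, each
equal to `A / θ`. For the term `ρ (v - u)`, the shear `(v, s) ↦ (v, v + s)` and Fubini give
`∫∫_{u, v ≤ 0} e^{θu} e^{θv} f (u - v) = ∫ f s ∫_{v ≤ min 0 (-s)} e^{θ(2v + s)} dv ds
  = (2θ)⁻¹ ∫ e^{-θ|s|} f s ds`,
which for `f = ρ` is again `A / θ`. Altogether `θ² (A/θ + A/θ - A/θ) / 2 = θ A / 2`.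
-/

open MeasureTheory Real Set

section Even

variable {E : Type*} [NormedAddCommGroup E] {g : ℝ → E}

lemma integrableOn_Iic_of_even (hg : ∀ x, g (-x) = g x) (h : IntegrableOn g (Ioi 0)) :
    IntegrableOn g (Iic 0) := by
  have := IntegrableOn.comp_neg_Iio (c := (0 : ℝ)) (f := g) (by rwa [neg_zero])
  simp only [hg] at this
  exact (integrableOn_Iic_iff_integrableOn_Iio).2 this

lemma integrable_of_even (hg : ∀ x, g (-x) = g x) (h : IntegrableOn g (Ioi 0)) :
    Integrable g := by
  rw [← integrableOn_univ, ← Iic_union_Ioi (a := 0)]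
  exact (integrableOn_Iic_of_even hg h).union h

lemma setIntegral_Iic_eq_setIntegral_Ioi_of_even [NormedSpace ℝ E] (hg : ∀ x, g (-x) = g x) :
    ∫ x in Iic 0, g x = ∫ x in Ioi 0, g x := by
  simpa [hg] using (integral_comp_neg_Ioi 0 g).symm

lemma integral_eq_two_smul_setIntegral_Ioi_of_even [NormedSpace ℝ E] (hg : ∀ x, g (-x) = g x)
    (h : IntegrableOn g (Ioi 0)) : ∫ x, g x = (2 : ℝ) • ∫ x in Ioi 0, g x := by
  rw [← integral_add_compl measurableSet_Iic (integrable_of_even hg h), compl_Iic,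
    setIntegral_Iic_eq_setIntegral_Ioi_of_even hg, two_smul]

end Even

lemma MeasureTheory.IntegrableOn.mul_prod {α β L : Type*} [MeasurableSpace α]
    [MeasurableSpace β] {μ : Measure α} {ν : Measure β} [SFinite μ] [SFinite ν] [NormedRing L]
    {f : α → L} {g : β → L} {s : Set α} {t : Set β} (hf : IntegrableOn f s μ)
    (hg : IntegrableOn g t ν) :
    IntegrableOn (fun z : α × β => f z.1 * g z.2) (s ×ˢ t) (μ.prod ν) := by
  rw [IntegrableOn, ← Measure.prod_restrict]
  exact Integrable.mul_prod hf hg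

lemma indicator_setOf_fst_le_apply {α β M : Type*} [Preorder α] [Zero M] (g : β → α)
    (F : α × β → M) (x : α) (y : β) :
    {z : α × β | z.1 ≤ g z.2}.indicator F (x, y) = (Iic (g y)).indicator (fun x => F (x, y)) x :=
  rfl

section ExpKernel

variable {θ : ℝ} {f : ℝ → ℝ}

lemma exp_add_mul_exp (s v : ℝ) :
    exp (θ * (v + s)) * exp (θ * v) = exp (θ * s) * exp (2 * θ * v) := by
  rw [← exp_add, ← exp_add]; ring_nf

lemma integrableOn_exp_add_mul_exp (hθ : 0 < θ) (s c : ℝ) :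
    IntegrableOn (fun v => exp (θ * (v + s)) * exp (θ * v)) (Iic c) := by
  simp_rw [exp_add_mul_exp]
  exact (integrableOn_exp_mul_Iic (by positivity) c).const_mul _

lemma integral_Iic_min_exp_add_mul_exp (hθ : 0 < θ) (s : ℝ) :
    ∫ v in Iic (min 0 (-s)), exp (θ * (v + s)) * exp (θ * v) = exp (-θ * |s|) / (2 * θ) := by
  simp_rw [exp_add_mul_exp, integral_const_mul, integral_exp_mul_Iic (by positivity : 0 < 2 * θ),
    mul_div_assoc', ← exp_add]
  congr 2
  rcases le_total s 0 with hs | hs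
  · rw [min_eq_left (by linarith), abs_of_nonpos hs]; ring
  · rw [min_eq_right (by linarith), abs_of_nonneg hs]; ring

lemma integrableOn_sheared_quadrant_exp_mul (hθ : 0 < θ)
    (hf : Integrable (fun s => exp (-θ * |s|) * f s)) :
    IntegrableOn (fun z : ℝ × ℝ => exp (θ * (z.1 + z.2)) * exp (θ * z.1) * f z.2)
      {z | z.1 ≤ min 0 (-z.2)} (volume.prod volume) := by
  have hf_meas : AEStronglyMeasurable f := by
    have : AEStronglyMeasurable (fun s => exp (θ * |s|) * (exp (-θ * |s|) * f s)) :=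
      (by fun_prop : Continuous fun s : ℝ => exp (θ * |s|)).aestronglyMeasurable.mul hf.1
    refine this.congr (ae_of_all _ fun s => ?_)
    simp [← mul_assoc, ← exp_add]
  have hS : MeasurableSet {z : ℝ × ℝ | z.1 ≤ min 0 (-z.2)} :=
    measurableSet_le measurable_fst (by fun_prop)
  have h_meas : AEStronglyMeasurable
      (fun z : ℝ × ℝ => exp (θ * (z.1 + z.2)) * exp (θ * z.1) * f z.2) (volume.prod volume) :=
    (by fun_prop : Continuous fun z : ℝ × ℝ => exp (θ * (z.1 + z.2)) * exp (θ * z.1))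
      |>.aestronglyMeasurable.mul hf_meas.comp_snd
  rw [← integrable_indicator_iff hS, integrable_prod_iff' (h_meas.indicator hS)]
  simp_rw [indicator_setOf_fst_le_apply (fun s : ℝ => min 0 (-s)),
    norm_indicator_eq_indicator_norm]
  refine ⟨ae_of_all _ fun s => ?_, ?_⟩
  · exact (integrable_indicator_iff measurableSet_Iic).2
      ((integrableOn_exp_add_mul_exp hθ s _).mul_const _)
  · refine (hf.norm.div_const (2 * θ)).congr (ae_of_all _ fun s => ?_)
    simp only [integral_indicator measurableSet_Iic, norm_mul, norm_of_nonneg (exp_pos _).le,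
      integral_mul_const, integral_Iic_min_exp_add_mul_exp hθ]
    ring

lemma setIntegral_sheared_quadrant_exp_mul (hθ : 0 < θ)
    (hf : Integrable (fun s => exp (-θ * |s|) * f s)) :
    ∫ z in {z : ℝ × ℝ | z.1 ≤ min 0 (-z.2)}, exp (θ * (z.1 + z.2)) * exp (θ * z.1) * f z.2
        ∂(volume.prod volume) = (∫ s, exp (-θ * |s|) * f s) / (2 * θ) := by
  have hS : MeasurableSet {z : ℝ × ℝ | z.1 ≤ min 0 (-z.2)} :=
    measurableSet_le measurable_fst (by fun_prop)
  have hint := (integrable_indicator_iff hS).2 (integrableOn_sheared_quadrant_exp_mul hθ hf)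
  rw [← integral_indicator hS, integral_prod_symm _ hint, ← integral_div]
  simp_rw [indicator_setOf_fst_le_apply (fun s : ℝ => min 0 (-s)),
    integral_indicator measurableSet_Iic, integral_mul_const, integral_Iic_min_exp_add_mul_exp hθ]
  congr 1 with s
  ring

lemma shear_preimage_Iic_prod_Iic :
    (fun z : ℝ × ℝ => (z.1, z.1 + z.2)) ⁻¹' (Iic 0 ×ˢ Iic 0) = {z | z.1 ≤ min 0 (-z.2)} := by
  ext z
  simp only [mem_preimage, mem_prod, mem_Iic, mem_ofPred_eq, le_min_iff]
  constructor <;> rintro ⟨h₁, h₂⟩ <;> constructor <;> linarith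

theorem integrableOn_Iic_prod_Iic_exp_mul_exp_mul_comp_sub (hθ : 0 < θ)
    (hf : Integrable (fun s => exp (-θ * |s|) * f s)) :
    IntegrableOn (fun z : ℝ × ℝ => exp (θ * z.2) * exp (θ * z.1) * f (z.2 - z.1))
      (Iic 0 ×ˢ Iic 0) (volume.prod volume) := by
  rw [← (measurePreserving_prod_add volume volume).integrableOn_comp_preimage
    (MeasurableEquiv.shearAddRight ℝ).measurableEmbedding, shear_preimage_Iic_prod_Iic]
  simpa [Function.comp_def] using integrableOn_sheared_quadrant_exp_mul hθ hf

theorem setIntegral_Iic_prod_Iic_exp_mul_exp_mul_comp_sub (hθ : 0 < θ)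
    (hf : Integrable (fun s => exp (-θ * |s|) * f s)) :
    ∫ z in Iic 0 ×ˢ Iic 0, exp (θ * z.2) * exp (θ * z.1) * f (z.2 - z.1) ∂(volume.prod volume)
      = (∫ s, exp (-θ * |s|) * f s) / (2 * θ) := by
  rw [← (measurePreserving_prod_add volume volume).setIntegral_preimage_emb
    (MeasurableEquiv.shearAddRight ℝ).measurableEmbedding, shear_preimage_Iic_prod_Iic]
  simpa using setIntegral_sheared_quadrant_exp_mul hθ hf

end ExpKernel

section EvenWeight

variable {θ : ℝ} {ρ : ℝ → ℝ}

lemma exp_neg_abs_mul_neg_of_even (hρeven : ∀ x, ρ (-x) = ρ x) (s : ℝ) :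
    exp (-θ * |-s|) * ρ (-s) = exp (-θ * |s|) * ρ s := by
  rw [abs_neg, hρeven]

lemma eqOn_Iic_exp_neg_abs_mul :
    EqOn (fun s => exp (-θ * |s|) * ρ s) (fun u => exp (θ * u) * ρ u) (Iic 0) := fun u hu => by
  simp [abs_of_nonpos (mem_Iic.1 hu)]

lemma setIntegral_Ioi_exp_neg_abs_mul :
    ∫ s in Ioi 0, exp (-θ * |s|) * ρ s = ∫ t in Ioi 0, exp (-θ * t) * ρ t :=
  setIntegral_congr_fun measurableSet_Ioi fun t ht => by rw [abs_of_pos (mem_Ioi.1 ht)]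

lemma integrableOn_Ioi_exp_neg_abs_mul (hρ : Continuous ρ)
    (hρint : IntegrableOn (fun t => exp (-θ * t) * |ρ t|) (Ioi 0)) :
    IntegrableOn (fun s => exp (-θ * |s|) * ρ s) (Ioi 0) := by
  have hcont : Continuous fun s => exp (-θ * |s|) * ρ s := by fun_prop
  refine hρint.mono' hcont.aestronglyMeasurable.restrict ?_
  filter_upwards [ae_restrict_mem measurableSet_Ioi] with t ht
  rw [norm_mul, norm_of_nonneg (exp_pos _).le, norm_eq_abs, abs_of_pos ht]

lemma integrable_exp_neg_abs_mul_of_even (hρ : Continuous ρ) (hρeven : ∀ x, ρ (-x) = ρ x)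
    (hρint : IntegrableOn (fun t => exp (-θ * t) * |ρ t|) (Ioi 0)) :
    Integrable (fun s => exp (-θ * |s|) * ρ s) :=
  integrable_of_even (exp_neg_abs_mul_neg_of_even hρeven)
    (integrableOn_Ioi_exp_neg_abs_mul hρ hρint)

lemma integral_exp_neg_abs_mul_of_even (hρ : Continuous ρ) (hρeven : ∀ x, ρ (-x) = ρ x)
    (hρint : IntegrableOn (fun t => exp (-θ * t) * |ρ t|) (Ioi 0)) :
    ∫ s, exp (-θ * |s|) * ρ s = 2 * ∫ t in Ioi 0, exp (-θ * t) * ρ t := by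
  rw [integral_eq_two_smul_setIntegral_Ioi_of_even (exp_neg_abs_mul_neg_of_even hρeven)
    (integrableOn_Ioi_exp_neg_abs_mul hρ hρint), setIntegral_Ioi_exp_neg_abs_mul, smul_eq_mul]

lemma integrableOn_Iic_exp_mul_of_even (hρ : Continuous ρ) (hρeven : ∀ x, ρ (-x) = ρ x)
    (hρint : IntegrableOn (fun t => exp (-θ * t) * |ρ t|) (Ioi 0)) :
    IntegrableOn (fun u => exp (θ * u) * ρ u) (Iic 0) :=
  (integrableOn_Iic_of_even (exp_neg_abs_mul_neg_of_even hρeven)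
    (integrableOn_Ioi_exp_neg_abs_mul hρ hρint)).congr_fun eqOn_Iic_exp_neg_abs_mul
    measurableSet_Iic

lemma setIntegral_Iic_exp_mul_of_even (hρeven : ∀ x, ρ (-x) = ρ x) :
    ∫ u in Iic 0, exp (θ * u) * ρ u = ∫ t in Ioi 0, exp (-θ * t) * ρ t := by
  rw [← setIntegral_congr_fun measurableSet_Iic eqOn_Iic_exp_neg_abs_mul,
    setIntegral_Iic_eq_setIntegral_Ioi_of_even (exp_neg_abs_mul_neg_of_even hρeven),
    setIntegral_Ioi_exp_neg_abs_mul]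

end EvenWeight

theorem stmt_9_general (θ : ℝ) (hθ : 0 < θ) (ρ : ℝ → ℝ) (hρcont : Continuous ρ)
    (hρeven : ∀ x, ρ (-x) = ρ x)
    (hρint : IntegrableOn (fun t => Real.exp (-θ * t) * |ρ t|) (Ioi 0))
    (R : ℝ → ℝ → ℝ) (hR : ∀ u v, R u v = (ρ u + ρ v - ρ (v - u)) / 2) :
    θ ^ 2 * ∫ v in Iic (0:ℝ), ∫ u in Iic (0:ℝ),
        Real.exp (θ * u) * Real.exp (θ * v) * R u v
    = (θ / 2) * ∫ t in Ioi (0:ℝ), Real.exp (-θ * t) * ρ t := by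
  have hk := integrable_exp_neg_abs_mul_of_even hρcont hρeven hρint
  have hP := integrableOn_Iic_exp_mul_of_even hρcont hρeven hρint
  have hE := integrableOn_exp_mul_Iic hθ 0
  have hdecomp : ∀ z : ℝ × ℝ, exp (θ * z.2) * exp (θ * z.1) * R z.2 z.1
      = (exp (θ * z.1) * (exp (θ * z.2) * ρ z.2) + exp (θ * z.1) * ρ z.1 * exp (θ * z.2)
        - exp (θ * z.2) * exp (θ * z.1) * ρ (z.2 - z.1)) / 2 := fun z => by
    rw [hR, ← hρeven (z.2 - z.1), neg_sub]; ring
  have hQ : MeasurableSet (Iic (0:ℝ) ×ˢ Iic (0:ℝ)) := measurableSet_Iic.prod measurableSet_Iic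
  have h₁ := hE.mul_prod hP
  have h₂ := hP.mul_prod hE
  have h₃ := integrableOn_Iic_prod_Iic_exp_mul_exp_mul_comp_sub hθ hk
  have hG : IntegrableOn (fun z : ℝ × ℝ => exp (θ * z.2) * exp (θ * z.1) * R z.2 z.1)
      (Iic 0 ×ˢ Iic 0) (volume.prod volume) :=
    IntegrableOn.congr_fun (((h₁.add h₂).sub h₃).div_const 2) (fun z _ => (hdecomp z).symm) hQ
  rw [← setIntegral_prod _ hG, setIntegral_congr_fun hQ (fun z _ => hdecomp z), integral_div,
    integral_sub ?_ h₃, integral_add h₁ h₂,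
    setIntegral_prod_mul (fun v => exp (θ * v)) (fun u => exp (θ * u) * ρ u),
    setIntegral_prod_mul (fun v => exp (θ * v) * ρ v) (fun u => exp (θ * u)),
    setIntegral_Iic_prod_Iic_exp_mul_exp_mul_comp_sub hθ hk,
    integral_exp_neg_abs_mul_of_even hρcont hρeven hρint, setIntegral_Iic_exp_mul_of_even hρeven,
    integral_exp_mul_Iic hθ, mul_zero, exp_zero]
  · field_simp
    ring
  · exact h₁.add h₂

theorem stmt_9 (θ : ℝ) (hθ : 0 < θ) (ρ : ℝ → ℝ) (hρcont : Continuous ρ)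
    (hρeven : ∀ x, ρ (-x) = ρ x) (hρ0 : ρ 0 = 0)
    (hρint : IntegrableOn (fun t => Real.exp (-θ * t) * |ρ t|) (Ioi 0))
    (R : ℝ → ℝ → ℝ) (hR : ∀ u v, R u v = (ρ u + ρ v - ρ (v - u)) / 2)
    (hInner : ∀ v : ℝ, IntegrableOn
      (fun u => Real.exp (θ * u) * Real.exp (θ * v) * R u v) (Iic 0))
    (hOuter : IntegrableOn
      (fun v => ∫ u in Iic (0:ℝ), Real.exp (θ * u) * Real.exp (θ * v) * R u v)
      (Iic 0)) :
    θ ^ 2 * ∫ v in Iic (0:ℝ), ∫ u in Iic (0:ℝ),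
        Real.exp (θ * u) * Real.exp (θ * v) * R u v
    = (θ / 2) * ∫ t in Ioi (0:ℝ), Real.exp (-θ * t) * ρ t :=
  stmt_9_general θ hθ ρ hρcont hρeven hρint R hR
end

section
/- Let H ∈ (0,1), θ > 0, and t > 2. Then e^{-2θt} ∫_0^t e^{θs} ∫_0^s (r+s)^{2H-2} e^{θr} dr ds ≤ C t^{2H-2}, for a constant C > 0 depending only on θ and H. -/
open MeasureTheory Real Set

private lemma key_pt {H r s : ℝ} (hH1 : H < 1) (hr : 0 < r) (hrs : r ≤ s) :
    (r + s) ^ (2 * H - 2) ≤ r ^ (H - 1) * s ^ (H - 1) := by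
  have hs : 0 < s := hr.trans_le hrs
  have hsq : 0 < r * s := mul_pos hr hs
  have h1 : 2 * Real.sqrt (r * s) ≤ r + s := by
    nlinarith [sq_nonneg (Real.sqrt r - Real.sqrt s), Real.sq_sqrt hr.le, Real.sq_sqrt hs.le,
      Real.sqrt_mul hr.le s]
  have h2 : (r + s) ^ (2 * H - 2) ≤ (2 * Real.sqrt (r * s)) ^ (2 * H - 2) :=
    Real.rpow_le_rpow_of_nonpos (by positivity) h1 (by linarith)
  have h3 : (2 * Real.sqrt (r * s)) ^ (2 * H - 2) = 2 ^ (2 * H - 2) * (r * s) ^ (H - 1) := by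
    rw [Real.mul_rpow (by norm_num) (Real.sqrt_nonneg _), Real.sqrt_eq_rpow,
      ← Real.rpow_mul hsq.le]
    congr 1
    ring_nf
  have h4 : (2:ℝ) ^ (2 * H - 2) ≤ 1 :=
    Real.rpow_le_one_of_one_le_of_nonpos one_le_two (by linarith)
  have h5 : (r * s) ^ (H - 1) = r ^ (H - 1) * s ^ (H - 1) := Real.mul_rpow hr.le hs.le
  have h6 : 2 ^ (2 * H - 2) * (r * s) ^ (H - 1) ≤ 1 * (r * s) ^ (H - 1) :=
    mul_le_mul_of_nonneg_right h4 (Real.rpow_nonneg hsq.le _)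
  calc (r + s) ^ (2 * H - 2) ≤ 2 ^ (2 * H - 2) * (r * s) ^ (H - 1) := h3 ▸ h2
    _ ≤ 1 * (r * s) ^ (H - 1) := h6
    _ = r ^ (H - 1) * s ^ (H - 1) := by rw [one_mul, h5]

private lemma intF {H θ : ℝ} (hH0 : 0 < H) (a b : ℝ) :
    IntervalIntegrable (fun r => r ^ (H - 1) * Real.exp (θ * r)) volume a b :=
  (intervalIntegral.intervalIntegrable_rpow' (by linarith)).mul_continuousOn
    ((Real.continuous_exp.comp (continuous_const.mul continuous_id)).continuousOn)

private lemma exp_int (θ : ℝ) (hθ : 0 < θ) (a b : ℝ) :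
    ∫ x in a..b, Real.exp (θ * x) = (Real.exp (θ * b) - Real.exp (θ * a)) / θ := by
  rw [intervalIntegral.integral_comp_mul_left (fun x => Real.exp x) hθ.ne', integral_exp,
    smul_eq_mul]
  ring

private lemma stepF {H θ : ℝ} (hH0 : 0 < H) (hH1 : H < 1) (hθ : 0 < θ) {t : ℝ} (ht : t > 2) :
    Real.exp (-(θ * t)) * ∫ r in Ioc (0:ℝ) t, r ^ (H - 1) * Real.exp (θ * r)
      ≤ (8 / (H * θ ^ 2) + 2 / θ) * t ^ (H - 1) := by
  have ht0 : (0:ℝ) < t := by linarith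
  have ht2 : (0:ℝ) < t / 2 := by linarith
  have hP : (0:ℝ) < t ^ (H - 1) := Real.rpow_pos_of_pos ht0 _
  -- convert to interval integral and split
  rw [← intervalIntegral.integral_of_le ht0.le,
    ← intervalIntegral.integral_add_adjacent_intervals (intF hH0 0 (t/2)) (intF hH0 (t/2) t)]
  -- bound on [0, t/2]
  have hA : ∫ r in (0:ℝ)..(t/2), r ^ (H - 1) * Real.exp (θ * r)
      ≤ Real.exp (θ * (t / 2)) * ((t / 2) ^ H / H) := by
    have h1 : ∫ r in (0:ℝ)..(t/2), r ^ (H - 1) * Real.exp (θ * r)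
        ≤ ∫ r in (0:ℝ)..(t/2), r ^ (H - 1) * Real.exp (θ * (t / 2)) := by
      apply intervalIntegral.integral_mono_on ht2.le (intF hH0 0 (t/2))
        ((intervalIntegral.intervalIntegrable_rpow' (by linarith)).mul_continuousOn
          continuousOn_const)
      intro x hx
      exact mul_le_mul_of_nonneg_left
        (Real.exp_le_exp.mpr (mul_le_mul_of_nonneg_left hx.2 hθ.le))
        (Real.rpow_nonneg hx.1 _)
    have h2 : ∫ r in (0:ℝ)..(t/2), r ^ (H - 1) * Real.exp (θ * (t / 2))
        = Real.exp (θ * (t / 2)) * ((t / 2) ^ H / H) := by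
      rw [intervalIntegral.integral_mul_const, integral_rpow (Or.inl (by linarith))]
      have hh : H - 1 + 1 = H := by ring
      rw [hh, Real.zero_rpow hH0.ne']
      ring
    linarith
  -- bound on [t/2, t]
  have hB : ∫ r in (t/2)..t, r ^ (H - 1) * Real.exp (θ * r)
      ≤ (t / 2) ^ (H - 1) * (Real.exp (θ * t) / θ) := by
    have h1 : ∫ r in (t/2)..t, r ^ (H - 1) * Real.exp (θ * r)
        ≤ ∫ r in (t/2)..t, (t / 2) ^ (H - 1) * Real.exp (θ * r) := by
      apply intervalIntegral.integral_mono_on (by linarith) (intF hH0 (t/2) t)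
        (Continuous.intervalIntegrable (by continuity) _ _)
      intro x hx
      exact mul_le_mul_of_nonneg_right
        (Real.rpow_le_rpow_of_nonpos ht2 hx.1 (by linarith)) (Real.exp_nonneg _)
    have h2 : ∫ r in (t/2)..t, (t / 2) ^ (H - 1) * Real.exp (θ * r)
        = (t / 2) ^ (H - 1) * ((Real.exp (θ * t) - Real.exp (θ * (t / 2))) / θ) := by
      rw [intervalIntegral.integral_const_mul, exp_int θ hθ]
    have h3 : (t / 2) ^ (H - 1) * ((Real.exp (θ * t) - Real.exp (θ * (t / 2))) / θ)
        ≤ (t / 2) ^ (H - 1) * (Real.exp (θ * t) / θ) := by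
      apply mul_le_mul_of_nonneg_left _ (Real.rpow_nonneg ht2.le _)
      apply div_le_div_of_nonneg_right _ hθ.le  -- (a - b)/θ ≤ a/θ
      linarith [Real.exp_pos (θ * (t / 2))]
    linarith
  have hEpos := Real.exp_pos (θ * (t / 2))
  -- exp lower bound : θ² t² / 16 ≤ exp (θ t / 2)
  have hE : θ ^ 2 * t ^ 2 / 16 ≤ Real.exp (θ * (t / 2)) := by
    have h4 := Real.add_one_le_exp (θ * t / 4)
    have hsplit : Real.exp (θ * (t / 2)) = Real.exp (θ * t / 4) * Real.exp (θ * t / 4) := by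
      rw [← Real.exp_add]; ring_nf
    have h40 : (0:ℝ) ≤ θ * t / 4 := by positivity
    nlinarith [Real.exp_pos (θ * t / 4)]
  -- goal 1
  have hG1 : Real.exp (-(θ * t)) * (Real.exp (θ * (t / 2)) * ((t / 2) ^ H / H))
      ≤ 8 / (H * θ ^ 2) * t ^ (H - 1) := by
    have hme : Real.exp (-(θ * t)) * Real.exp (θ * (t / 2)) = (Real.exp (θ * (t / 2)))⁻¹ := by
      rw [← Real.exp_add, ← Real.exp_neg]
      ring_nf
    have hpow2 : (t / 2) ^ H ≤ t ^ (H - 1) * t := by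
      have h5 : (t / 2) ^ H ≤ t ^ H :=
        Real.rpow_le_rpow ht2.le (by linarith) hH0.le
      have h6 : t ^ H = t ^ (H - 1) * t := by
        rw [show H = H - 1 + 1 by ring, Real.rpow_add_one ht0.ne']
        ring_nf
      linarith
    have hkey : t / Real.exp (θ * (t / 2)) ≤ 8 / θ ^ 2 := by
      rw [div_le_div_iff₀ hEpos (by positivity)]
      nlinarith [mul_nonneg (sq_nonneg θ) (mul_nonneg ht0.le (by linarith : (0:ℝ) ≤ t - 2))]
    calc Real.exp (-(θ * t)) * (Real.exp (θ * (t / 2)) * ((t / 2) ^ H / H))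
        = Real.exp (-(θ * t)) * Real.exp (θ * (t / 2)) * ((t / 2) ^ H / H) := by ring
      _ = (Real.exp (θ * (t / 2)))⁻¹ * ((t / 2) ^ H / H) := by rw [hme]
      _ ≤ (Real.exp (θ * (t / 2)))⁻¹ * (t ^ (H - 1) * t / H) := by
          apply mul_le_mul_of_nonneg_left _ (by positivity)
          exact div_le_div_of_nonneg_right hpow2 hH0.le
      _ = t ^ (H - 1) * (t / Real.exp (θ * (t / 2))) / H := by ring
      _ ≤ t ^ (H - 1) * (8 / θ ^ 2) / H := by
          apply div_le_div_of_nonneg_right _ hH0.le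
          exact mul_le_mul_of_nonneg_left hkey hP.le
      _ = 8 / (H * θ ^ 2) * t ^ (H - 1) := by ring
  -- goal 2
  have hG2 : Real.exp (-(θ * t)) * ((t / 2) ^ (H - 1) * (Real.exp (θ * t) / θ))
      ≤ 2 / θ * t ^ (H - 1) := by
    have hhalf : (t / 2) ^ (H - 1) ≤ t ^ (H - 1) * 2 := by
      have h7 : (t / 2 : ℝ) ^ (H - 1) = t ^ (H - 1) * (2:ℝ) ^ (-(H - 1)) := by
        rw [div_eq_mul_inv, Real.mul_rpow ht0.le (by norm_num),
          Real.inv_rpow (by norm_num), ← Real.rpow_neg (by norm_num)]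
      have h8 : (2:ℝ) ^ (-(H - 1)) ≤ 2 := by
        calc (2:ℝ) ^ (-(H - 1)) ≤ 2 ^ (1:ℝ) :=
              Real.rpow_le_rpow_of_exponent_le one_le_two (by linarith)
          _ = 2 := Real.rpow_one 2
      rw [h7]
      exact mul_le_mul_of_nonneg_left h8 hP.le
    have hme : Real.exp (-(θ * t)) * Real.exp (θ * t) = 1 := by
      rw [← Real.exp_add]; simp
    calc Real.exp (-(θ * t)) * ((t / 2) ^ (H - 1) * (Real.exp (θ * t) / θ))
        = (t / 2) ^ (H - 1) * (Real.exp (-(θ * t)) * Real.exp (θ * t)) / θ := by ring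
      _ = (t / 2) ^ (H - 1) / θ := by rw [hme]; ring
      _ ≤ (t ^ (H - 1) * 2) / θ := div_le_div_of_nonneg_right hhalf hθ.le
      _ = 2 / θ * t ^ (H - 1) := by ring
  have hmul : Real.exp (-(θ * t)) *
      ((∫ r in (0:ℝ)..(t/2), r ^ (H - 1) * Real.exp (θ * r)) +
        ∫ r in (t/2)..t, r ^ (H - 1) * Real.exp (θ * r))
      ≤ Real.exp (-(θ * t)) * (Real.exp (θ * (t / 2)) * ((t / 2) ^ H / H)
          + (t / 2) ^ (H - 1) * (Real.exp (θ * t) / θ)) := by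
    apply mul_le_mul_of_nonneg_left _ (Real.exp_nonneg _)
    linarith
  calc Real.exp (-(θ * t)) *
      ((∫ r in (0:ℝ)..(t/2), r ^ (H - 1) * Real.exp (θ * r)) +
        ∫ r in (t/2)..t, r ^ (H - 1) * Real.exp (θ * r))
      ≤ Real.exp (-(θ * t)) * (Real.exp (θ * (t / 2)) * ((t / 2) ^ H / H))
        + Real.exp (-(θ * t)) * ((t / 2) ^ (H - 1) * (Real.exp (θ * t) / θ)) := by
        rw [← mul_add]; exact hmul
    _ ≤ 8 / (H * θ ^ 2) * t ^ (H - 1) + 2 / θ * t ^ (H - 1) := add_le_add hG1 hG2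
    _ = (8 / (H * θ ^ 2) + 2 / θ) * t ^ (H - 1) := by ring

theorem stmt_16 (H θ : ℝ) (hH0 : 0 < H) (hH1 : H < 1) (hθ : 0 < θ) :
    ∃ C > 0, ∀ t : ℝ, t > 2 →
      Real.exp (-2 * θ * t) *
        ∫ s in Ioc (0:ℝ) t, Real.exp (θ * s) *
          ∫ r in Ioc (0:ℝ) s, (r + s) ^ (2 * H - 2) * Real.exp (θ * r)
      ≤ C * t ^ (2 * H - 2) := by
  refine ⟨(8 / (H * θ ^ 2) + 2 / θ) ^ 2, by positivity, fun t ht => ?_⟩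
  have ht0 : (0:ℝ) < t := by linarith
  set F : ℝ → ℝ := fun r => r ^ (H - 1) * Real.exp (θ * r) with hF
  set I : ℝ := ∫ r in Ioc (0:ℝ) t, F r with hI
  have hIF : IntegrableOn F (Ioc 0 t) :=
    (intervalIntegrable_iff_integrableOn_Ioc_of_le ht0.le).mp (intF hH0 0 t)
  have hFnn : ∀ r : ℝ, 0 ≤ r → 0 ≤ F r := fun r hr =>
    mul_nonneg (Real.rpow_nonneg hr _) (Real.exp_nonneg _)
  have hInn : 0 ≤ I :=
    setIntegral_nonneg measurableSet_Ioc fun r hr => hFnn r hr.1.le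
  -- inner bound
  have hinner : ∀ s ∈ Ioc (0:ℝ) t,
      (∫ r in Ioc (0:ℝ) s, (r + s) ^ (2 * H - 2) * Real.exp (θ * r)) ≤ s ^ (H - 1) * I := by
    intro s hs
    have hs0 : 0 < s := hs.1
    have hIFs : IntegrableOn F (Ioc 0 s) := hIF.mono_set (Ioc_subset_Ioc_right hs.2)
    have step1 : (∫ r in Ioc (0:ℝ) s, (r + s) ^ (2 * H - 2) * Real.exp (θ * r))
        ≤ ∫ r in Ioc (0:ℝ) s, s ^ (H - 1) * F r := by
      apply integral_mono_of_nonneg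
      · refine (ae_restrict_iff' measurableSet_Ioc).mpr (ae_of_all _ fun r hr => ?_)
        exact mul_nonneg (Real.rpow_nonneg (by linarith [hr.1] : (0:ℝ) ≤ r + s) _)
          (Real.exp_nonneg _)
      · exact hIFs.const_mul _
      · refine (ae_restrict_iff' measurableSet_Ioc).mpr (ae_of_all _ fun r hr => ?_)
        have h := mul_le_mul_of_nonneg_right (key_pt hH1 hr.1 hr.2) (Real.exp_nonneg (θ * r))
        exact h.trans_eq (by simp only [hF]; ring)
    have step2 : ∫ r in Ioc (0:ℝ) s, s ^ (H - 1) * F r = s ^ (H - 1) * ∫ r in Ioc (0:ℝ) s, F r :=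
      integral_const_mul _ _
    have step3 : (∫ r in Ioc (0:ℝ) s, F r) ≤ I := by
      apply setIntegral_mono_set hIF
      · exact (ae_restrict_iff' measurableSet_Ioc).mpr (ae_of_all _ fun r hr => hFnn r hr.1.le)
      · exact (Ioc_subset_Ioc_right hs.2).eventuallyLE
    calc (∫ r in Ioc (0:ℝ) s, (r + s) ^ (2 * H - 2) * Real.exp (θ * r))
        ≤ s ^ (H - 1) * ∫ r in Ioc (0:ℝ) s, F r := step2 ▸ step1
      _ ≤ s ^ (H - 1) * I := mul_le_mul_of_nonneg_left step3 (Real.rpow_nonneg hs0.le _)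
  -- outer bound
  have houter : (∫ s in Ioc (0:ℝ) t, Real.exp (θ * s) *
      ∫ r in Ioc (0:ℝ) s, (r + s) ^ (2 * H - 2) * Real.exp (θ * r)) ≤ I * I := by
    have step1 : (∫ s in Ioc (0:ℝ) t, Real.exp (θ * s) *
        ∫ r in Ioc (0:ℝ) s, (r + s) ^ (2 * H - 2) * Real.exp (θ * r))
        ≤ ∫ s in Ioc (0:ℝ) t, I * F s := by
      apply integral_mono_of_nonneg
      · refine ae_of_all _ fun s => ?_
        apply mul_nonneg (Real.exp_nonneg _)
        apply setIntegral_nonneg measurableSet_Ioc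
        intro r hr
        exact mul_nonneg (Real.rpow_nonneg (by linarith [hr.1, hr.2] : (0:ℝ) ≤ r + s) _)
          (Real.exp_nonneg _)
      · exact hIF.const_mul _
      · refine (ae_restrict_iff' measurableSet_Ioc).mpr (ae_of_all _ fun s hs => ?_)
        have h := mul_le_mul_of_nonneg_left (hinner s hs) (Real.exp_nonneg (θ * s))
        exact h.trans_eq (by simp only [hF]; ring)
    have step2 : ∫ s in Ioc (0:ℝ) t, I * F s = I * I := by
      rw [integral_const_mul]
    linarith [step2 ▸ step1]
  have hstepF := stepF hH0 hH1 hθ ht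
  have hEnn := Real.exp_nonneg (-2 * θ * t)
  have hsq : Real.exp (-2 * θ * t) = Real.exp (-(θ * t)) * Real.exp (-(θ * t)) := by
    rw [← Real.exp_add]; ring_nf
  have hfinal : Real.exp (-2 * θ * t) * (I * I)
      ≤ (8 / (H * θ ^ 2) + 2 / θ) ^ 2 * t ^ (2 * H - 2) := by
    have h1 : Real.exp (-2 * θ * t) * (I * I)
        = (Real.exp (-(θ * t)) * I) * (Real.exp (-(θ * t)) * I) := by
      rw [hsq]; ring
    have h2 : (Real.exp (-(θ * t)) * I) * (Real.exp (-(θ * t)) * I)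
        ≤ ((8 / (H * θ ^ 2) + 2 / θ) * t ^ (H - 1)) * ((8 / (H * θ ^ 2) + 2 / θ) * t ^ (H - 1)) := by
      apply mul_le_mul hstepF hstepF (mul_nonneg (Real.exp_nonneg _) hInn)
      positivity
    have h3 : ((8 / (H * θ ^ 2) + 2 / θ) * t ^ (H - 1)) * ((8 / (H * θ ^ 2) + 2 / θ) * t ^ (H - 1))
        = (8 / (H * θ ^ 2) + 2 / θ) ^ 2 * t ^ (2 * H - 2) := by
      rw [show (2 * H - 2 : ℝ) = (H - 1) + (H - 1) by ring, Real.rpow_add ht0]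
      ring
    linarith [h1 ▸ (h2.trans_eq h3)]
  calc Real.exp (-2 * θ * t) *
      ∫ s in Ioc (0:ℝ) t, Real.exp (θ * s) *
        ∫ r in Ioc (0:ℝ) s, (r + s) ^ (2 * H - 2) * Real.exp (θ * r)
      ≤ Real.exp (-2 * θ * t) * (I * I) := mul_le_mul_of_nonneg_left houter hEnn
    _ ≤ (8 / (H * θ ^ 2) + 2 / θ) ^ 2 * t ^ (2 * H - 2) := hfinal
end
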